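/- Let ρ_J, ρ_K ∈ {ρ₁, ρ₂, ρ₃, ρ₁₂, ρ₂₃, ρ₁₂₃} be elements of the torus algebra 𝒜 with ρ_{JK} := ρ_J·ρ_K ≠ 0. Let M be the type-D structure over 𝒜 with basis {w, z, y, x} and δ¹w = ρ_J ⊗ z, δ¹y = 1 ⊗ z + ρ_K ⊗ x, δ¹z = 0, δ¹x = 0, and let M′ be the type-D structure with basis {b, a} and δ¹b = ρ_{JK} ⊗ a, δ¹a = 0. Then M and M′ are homotopy equivalent. -/

import Mathlib

/-!
The arrow `y → z` of `M` has coefficient `1`, so it can be cancelled (Gaussian elimination).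
For any type-D structure `d` over a ring of characteristic `2` with `d y z = 1`, the other
generators carry the reduced differential `d' = d + d(·, z) · d(y, ·)`; the projection
`u ↦ u + [u = z] · d(y, ·)`, the inclusion `v ↦ v + d(v, z) · y` and the homotopy `z ↦ y`
form a homotopy equivalence, using only `d² = 0`. In `M` the zigzag `w → z ← y → x`
collapses to the single arrow `b → a` with coefficient `ρ_J ρ_K`, which is `M′`.
-/

/-- The torus algebra: the 8-dimensional `F₂`-algebra with basis
`{ι₀, ι₁, ρ₁, ρ₂, ρ₃, ρ₁₂, ρ₂₃, ρ₁₂₃}`, encoded by its full multiplication table. -/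
structure TorusAlg (A : Type) [Ring A] [Algebra (ZMod 2) A] where
  i0 : A
  i1 : A
  r1 : A
  r2 : A
  r3 : A
  r12 : A
  r23 : A
  r123 : A
  basis_indep : LinearIndependent (ZMod 2) ![i0, i1, r1, r2, r3, r12, r23, r123]
  basis_span : Submodule.span (ZMod 2)
      ({i0, i1, r1, r2, r3, r12, r23, r123} : Set A) = ⊤
  sum_idem : i0 + i1 = 1
  i0_i0 : i0 * i0 = i0
  i1_i1 : i1 * i1 = i1
  i0_i1 : i0 * i1 = 0
  i1_i0 : i1 * i0 = 0
  i0_r1 : i0 * r1 = r1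
  r1_i1 : r1 * i1 = r1
  i1_r2 : i1 * r2 = r2
  r2_i0 : r2 * i0 = r2
  i0_r3 : i0 * r3 = r3
  r3_i1 : r3 * i1 = r3
  i0_r12 : i0 * r12 = r12
  r12_i0 : r12 * i0 = r12
  i1_r23 : i1 * r23 = r23
  r23_i1 : r23 * i1 = r23
  i0_r123 : i0 * r123 = r123
  r123_i1 : r123 * i1 = r123
  r1_r2 : r1 * r2 = r12
  r2_r3 : r2 * r3 = r23
  r1_r23 : r1 * r23 = r123
  r12_r3 : r12 * r3 = r123
  r1_r1 : r1 * r1 = 0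
  r1_r3 : r1 * r3 = 0
  r1_r12 : r1 * r12 = 0
  r1_r123 : r1 * r123 = 0
  r2_r1 : r2 * r1 = 0
  r2_r2 : r2 * r2 = 0
  r2_r12 : r2 * r12 = 0
  r2_r23 : r2 * r23 = 0
  r2_r123 : r2 * r123 = 0
  r3_r1 : r3 * r1 = 0
  r3_r2 : r3 * r2 = 0
  r3_r3 : r3 * r3 = 0
  r3_r12 : r3 * r12 = 0
  r3_r23 : r3 * r23 = 0
  r3_r123 : r3 * r123 = 0
  r12_r1 : r12 * r1 = 0
  r12_r2 : r12 * r2 = 0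
  r12_r12 : r12 * r12 = 0
  r12_r23 : r12 * r23 = 0
  r12_r123 : r12 * r123 = 0
  r23_r1 : r23 * r1 = 0
  r23_r2 : r23 * r2 = 0
  r23_r3 : r23 * r3 = 0
  r23_r12 : r23 * r12 = 0
  r23_r23 : r23 * r23 = 0
  r23_r123 : r23 * r123 = 0
  r123_r1 : r123 * r1 = 0
  r123_r2 : r123 * r2 = 0
  r123_r3 : r123 * r3 = 0
  r123_r12 : r123 * r12 = 0
  r123_r23 : r123 * r23 = 0
  r123_r123 : r123 * r123 = 0

variable {A : Type} [Ring A] [Algebra (ZMod 2) A]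

/-- Composition of morphisms of type-D structures, in matrix form. -/
def matComp {ι κ σ : Type} [Fintype κ] (F : ι → κ → A) (G : κ → σ → A) :
    ι → σ → A :=
  fun i s => ∑ j, F i j * G j s

/-- The identity morphism, in matrix form. -/
def matId {ι : Type} [DecidableEq ι] : ι → ι → A :=
  fun i j => if i = j then 1 else 0

/-- The differential of a morphism of type-D structures, in matrix form:
`∂F = F · d_N + d_M · F`. -/
def matDiff {ι κ : Type} [Fintype ι] [Fintype κ]
    (dM : ι → ι → A) (dN : κ → κ → A) (F : ι → κ → A) : ι → κ → A :=
  fun i k => (∑ j, F i j * dN j k) + (∑ j, dM i j * F j k)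

/-- The type-D structure equation `(μ ⊗ id) ∘ (id ⊗ δ¹) ∘ δ¹ = 0`, in matrix form. -/
def IsTypeD {ι : Type} [Fintype ι] (d : ι → ι → A) : Prop :=
  ∀ i k, (∑ j, d i j * d j k) = 0

/-- A morphism is a chain map when its differential vanishes. -/
def IsChainMap {ι κ : Type} [Fintype ι] [Fintype κ]
    (dM : ι → ι → A) (dN : κ → κ → A) (F : ι → κ → A) : Prop :=
  matDiff dM dN F = 0

/-- Homotopy equivalence of two type-D structures, in matrix form:
chain maps `F`, `G` with `G ∘ F + id = ∂H` and `F ∘ G + id = ∂H'`. -/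
def HtpyEquiv {ι κ : Type} [Fintype ι] [Fintype κ] [DecidableEq ι] [DecidableEq κ]
    (dM : ι → ι → A) (dN : κ → κ → A) : Prop :=
  ∃ (F : ι → κ → A) (G : κ → ι → A) (H : ι → ι → A) (H' : κ → κ → A),
    IsChainMap dM dN F ∧ IsChainMap dN dM G ∧
    matComp F G + matId = matDiff dM dM H ∧
    matComp G F + matId = matDiff dN dN H'

/-- Generators of the type-D structure `M`. -/
inductive GM5 | w | z | y | x
deriving DecidableEq

instance : Fintype GM5 :=
  Fintype.ofList [.w, .z, .y, .x] (by intro x; cases x <;> simp)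

/-- Generators of the type-D structure `M′`. -/
inductive GN5 | b | a
deriving DecidableEq

instance : Fintype GN5 :=
  Fintype.ofList [.b, .a] (by intro x; cases x <;> simp)

/-- `δ¹w = ρ_J ⊗ z`, `δ¹y = 1 ⊗ z + ρ_K ⊗ x`, `δ¹z = 0`, `δ¹x = 0`. -/
def dM5 (ρJ ρK : A) : GM5 → GM5 → A
  | .w, .z => ρJ
  | .y, .z => 1
  | .y, .x => ρK
  | _, _ => 0

/-- `δ¹b = ρ_{JK} ⊗ a`, `δ¹a = 0`. -/
def dN5 (ρJ ρK : A) : GN5 → GN5 → A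
  | .b, .a => ρJ * ρK
  | _, _ => 0

section CharTwo

variable {R : Type} [Ring R] [Algebra (ZMod 2) R]

theorem two_eq_zero_of_zmod_two : (2 : R) = 0 := by
  rw [← map_ofNat (algebraMap (ZMod 2) R) 2, show (2 : ZMod 2) = 0 from rfl, map_zero]

theorem add_self_eq_zero_of_zmod_two (a : R) : a + a = 0 := by
  rw [← two_mul, two_eq_zero_of_zmod_two, zero_mul]

theorem eq_of_add_eq_zero_of_zmod_two {a b : R} (h : a + b = 0) : a = b := by
  rw [eq_neg_of_add_eq_zero_left h, neg_eq_of_add_eq_zero_left (add_self_eq_zero_of_zmod_two b)]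

end CharTwo

namespace Cancellation

section Embedding

variable {ι κ : Type} {y z : ι} {e : κ ↪ ι}

theorem eq_or_eq_or_exists_emb_eq (he : Set.range e = {y, z}ᶜ) (u : ι) :
    y = u ∨ z = u ∨ ∃ c, e c = u := by
  by_cases h : y = u ∨ z = u
  · tauto
  · right; right
    rw [← Set.mem_range, he]
    simpa [eq_comm] using h

theorem emb_ne_source (he : Set.range e = {y, z}ᶜ) (c : κ) : e c ≠ y := by
  have : e c ∈ ({y, z}ᶜ : Set ι) := he ▸ Set.mem_range_self c
  simp_all

theorem emb_ne_target (he : Set.range e = {y, z}ᶜ) (c : κ) : e c ≠ z := by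
  have : e c ∈ ({y, z}ᶜ : Set ι) := he ▸ Set.mem_range_self c
  simp_all

theorem sum_eq_add_add_sum_emb [Fintype ι] [Fintype κ] [DecidableEq ι] {M : Type}
    [AddCommMonoid M] (hyz : y ≠ z) (he : Set.range e = {y, z}ᶜ) (f : ι → M) :
    ∑ u, f u = f y + f z + ∑ c, f (e c) := by
  have hmap : Finset.univ.map e = ({y, z} : Finset ι)ᶜ := by
    ext u; simpa [Set.ext_iff] using congrArg (u ∈ ·) he
  rw [← Finset.sum_map, hmap, ← Finset.sum_pair hyz, Finset.sum_add_sum_compl]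

end Embedding

variable {R : Type} [Ring R] {ι κ : Type} [DecidableEq ι]

def reducedDiff (d : ι → ι → R) (y z : ι) (e : κ ↪ ι) : κ → κ → R :=
  fun c c' => d (e c) (e c') + d (e c) z * d y (e c')

def proj (d : ι → ι → R) (y z : ι) (e : κ ↪ ι) : ι → κ → R :=
  fun u c => matId u (e c) + if u = z then d y (e c) else 0

def incl (d : ι → ι → R) (y z : ι) (e : κ ↪ ι) : κ → ι → R :=
  fun c u => matId (e c) u + if u = y then d (e c) z else 0

def homotopy (y z : ι) : ι → ι → R :=
  fun u u' => if u = z ∧ u' = y then 1 else 0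

variable {d : ι → ι → R} {y z : ι} {e : κ ↪ ι}

theorem matId_emb [DecidableEq κ] (c c' : κ) : (matId (e c) (e c') : R) = matId c c' := by
  simp [matId, e.injective.eq_iff]

theorem proj_emb [DecidableEq κ] (he : Set.range e = {y, z}ᶜ) (c c' : κ) :
    proj d y z e (e c) c' = matId c c' := by
  simp [proj, matId_emb, emb_ne_target he c]

theorem proj_target (he : Set.range e = {y, z}ᶜ) (c : κ) : proj d y z e z c = d y (e c) := by
  simp [proj, matId, (emb_ne_target he c).symm]

theorem proj_source (hyz : y ≠ z) (he : Set.range e = {y, z}ᶜ) (c : κ) :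
    proj d y z e y c = 0 := by
  simp [proj, matId, (emb_ne_source he c).symm, hyz]

theorem incl_emb [DecidableEq κ] (he : Set.range e = {y, z}ᶜ) (c c' : κ) :
    incl d y z e c (e c') = matId c c' := by
  simp [incl, matId_emb, emb_ne_source he c']

theorem incl_source (he : Set.range e = {y, z}ᶜ) (c : κ) : incl d y z e c y = d (e c) z := by
  simp [incl, matId, emb_ne_source he c]

theorem incl_target (hyz : y ≠ z) (he : Set.range e = {y, z}ᶜ) (c : κ) :
    incl d y z e c z = 0 := by
  simp [incl, matId, emb_ne_target he c, hyz.symm]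

theorem sum_matId_mul [Fintype κ] [DecidableEq κ] (c : κ) (f : κ → R) :
    ∑ c', matId c c' * f c' = f c := by
  simp [matId]

theorem sum_mul_matId [Fintype κ] [DecidableEq κ] (c : κ) (f : κ → R) :
    ∑ c', f c' * matId c' c = f c := by
  simp [matId]

variable [Fintype ι] [Fintype κ]

theorem sum_mul_emb_mul [Algebra (ZMod 2) R] (hd : IsTypeD d) (hyz : y ≠ z)
    (he : Set.range e = {y, z}ᶜ) (u v : ι) :
    ∑ c, d u (e c) * d (e c) v = d u y * d y v + d u z * d z v := by
  have h := hd u v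
  rw [sum_eq_add_add_sum_emb hyz he, add_comm] at h
  exact eq_of_add_eq_zero_of_zmod_two h

theorem sum_homotopy_mul (u : ι) (f : ι → R) :
    ∑ j, homotopy y z u j * f j = if u = z then f y else 0 := by
  by_cases hu : u = z <;> simp [homotopy, hu]

theorem sum_mul_homotopy (u : ι) (f : ι → R) :
    ∑ j, f j * homotopy y z j u = if u = y then f z else 0 := by
  by_cases hu : u = y <;> simp [homotopy, hu]

variable [DecidableEq κ] [Algebra (ZMod 2) R]

theorem isChainMap_proj (hd : IsTypeD d) (hyz : y ≠ z) (hdyz : d y z = 1)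
    (he : Set.range e = {y, z}ᶜ) : IsChainMap d (reducedDiff d y z e) (proj d y z e) := by
  funext u c'
  rcases eq_or_eq_or_exists_emb_eq he u with rfl | rfl | ⟨c, rfl⟩ <;>
  simp only [matDiff, Pi.zero_apply,
    sum_eq_add_add_sum_emb hyz he (fun j => d _ j * proj d y z e j c'), proj_source hyz he,
    proj_target he, proj_emb he, sum_mul_matId, sum_matId_mul, reducedDiff]
  · simp only [zero_mul, mul_zero, Finset.sum_const_zero, zero_add, hdyz, one_mul,
      add_self_eq_zero_of_zmod_two]
  · simp only [mul_add, Finset.sum_add_distrib, ← mul_assoc, ← Finset.sum_mul,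
      sum_mul_emb_mul hd hyz he, hdyz, one_mul, mul_one, mul_zero, zero_add, add_mul]
    abel_nf
    simp [two_eq_zero_of_zmod_two]
  · simp only [mul_zero, zero_add]
    abel_nf
    simp [two_eq_zero_of_zmod_two]

theorem isChainMap_incl (hd : IsTypeD d) (hyz : y ≠ z) (hdyz : d y z = 1)
    (he : Set.range e = {y, z}ᶜ) : IsChainMap (reducedDiff d y z e) d (incl d y z e) := by
  funext c u
  simp only [matDiff, Pi.zero_apply,
    sum_eq_add_add_sum_emb hyz he (fun j => incl d y z e c j * d j u), incl_source he,
    incl_target hyz he, incl_emb he, sum_matId_mul]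
  rcases eq_or_eq_or_exists_emb_eq he u with rfl | rfl | ⟨c₀, rfl⟩ <;>
  simp only [incl_source he, incl_target hyz he, incl_emb he, sum_mul_matId, reducedDiff]
  · simp only [add_mul, mul_assoc, Finset.sum_add_distrib, ← Finset.mul_sum,
      sum_mul_emb_mul hd hyz he, hdyz, mul_one, zero_mul, mul_add]
    abel_nf
    simp [two_eq_zero_of_zmod_two, add_self_eq_zero_of_zmod_two]
  · simp only [hdyz, mul_one, zero_mul, mul_zero, Finset.sum_const_zero, add_zero,
      add_self_eq_zero_of_zmod_two]
  · simp only [zero_mul, add_zero]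
    abel_nf
    simp [two_eq_zero_of_zmod_two]

theorem matComp_proj_incl (hd : IsTypeD d) (hyz : y ≠ z) (hdyz : d y z = 1)
    (he : Set.range e = {y, z}ᶜ) :
    matComp (proj d y z e) (incl d y z e) + matId = matDiff d d (homotopy y z) := by
  funext u u'
  simp only [matComp, matDiff, Pi.add_apply, sum_homotopy_mul, sum_mul_homotopy]
  rcases eq_or_eq_or_exists_emb_eq he u with rfl | rfl | ⟨c, rfl⟩ <;>
  simp only [proj_source hyz he, proj_target he, proj_emb he, sum_matId_mul, zero_mul,
    Finset.sum_const_zero, zero_add]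
  · by_cases hu : y = u'
    · subst hu; simp [matId, hdyz, hyz]
    · simp [matId, hu, Ne.symm hu, hyz]
  · rcases eq_or_eq_or_exists_emb_eq he u' with rfl | rfl | ⟨c', rfl⟩
    · simp [incl_source he, matId, hyz.symm, sum_mul_emb_mul hd hyz he, hdyz]
    · simp [incl_target hyz he, matId, hyz.symm, hdyz]
    · simp [incl_emb he, matId, emb_ne_source he, (emb_ne_target he c').symm]
  · simp only [incl, emb_ne_target he, if_false]
    abel_nf
    simp [two_eq_zero_of_zmod_two]

theorem matComp_incl_proj (hyz : y ≠ z) (he : Set.range e = {y, z}ᶜ) :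
    matComp (incl d y z e) (proj d y z e) + matId = matDiff (reducedDiff d y z e)
      (reducedDiff d y z e) 0 := by
  funext c c'
  simp [matComp, matDiff, sum_eq_add_add_sum_emb hyz he, incl_target hyz he, proj_source hyz he,
    proj_emb he, incl_emb he, sum_matId_mul, add_self_eq_zero_of_zmod_two]

theorem htpyEquiv_reducedDiff (hd : IsTypeD d) (hyz : y ≠ z) (hdyz : d y z = 1)
    (he : Set.range e = {y, z}ᶜ) : HtpyEquiv d (reducedDiff d y z e) :=
  ⟨proj d y z e, incl d y z e, homotopy y z, 0, isChainMap_proj hd hyz hdyz he,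
    isChainMap_incl hd hyz hdyz he, matComp_proj_incl hd hyz hdyz he, matComp_incl_proj hyz he⟩

end Cancellation

theorem isTypeD_of_forall_mul_eq_zero {R ι : Type} [Ring R] [Fintype ι] {d : ι → ι → R}
    (hd : ∀ i j k, d i j * d j k = 0) : IsTypeD d :=
  fun i k => Finset.sum_eq_zero fun j _ => hd i j k

def GN5.toGM5 : GN5 ↪ GM5 where
  toFun
    | .b => .w
    | .a => .x
  inj' := by
    intro i j h
    cases i <;> cases j <;> first | rfl | cases h

@[simp] theorem GN5.toGM5_b : GN5.toGM5 .b = .w := rfl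

@[simp] theorem GN5.toGM5_a : GN5.toGM5 .a = .x := rfl

theorem GN5.range_toGM5 : Set.range GN5.toGM5 = {.y, .z}ᶜ := by
  ext u
  constructor
  · rintro ⟨c, rfl⟩
    cases c <;> simp
  · intro hu
    cases u
    · exact ⟨.b, rfl⟩
    · simp at hu
    · simp at hu
    · exact ⟨.a, rfl⟩

theorem reducedDiff_dM5 {R : Type} [Ring R] (ρJ ρK : R) :
    Cancellation.reducedDiff (dM5 ρJ ρK) .y .z GN5.toGM5 = dN5 ρJ ρK := by
  funext i j
  cases i <;> cases j <;> simp [Cancellation.reducedDiff, dM5, dN5]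

theorem isTypeD_dM5 {R : Type} [Ring R] (ρJ ρK : R) : IsTypeD (dM5 ρJ ρK) :=
  isTypeD_of_forall_mul_eq_zero fun i j k => by cases i <;> cases j <;> cases k <;> simp [dM5]

theorem isTypeD_dN5 {R : Type} [Ring R] (ρJ ρK : R) : IsTypeD (dN5 ρJ ρK) :=
  isTypeD_of_forall_mul_eq_zero fun i j k => by cases i <;> cases j <;> cases k <;> simp [dN5]

theorem statement5_general (A : Type) [Ring A] [Algebra (ZMod 2) A] (ρJ ρK : A) :
    IsTypeD (dM5 ρJ ρK) ∧ IsTypeD (dN5 ρJ ρK) ∧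
      HtpyEquiv (dM5 ρJ ρK) (dN5 ρJ ρK) := by
  refine ⟨isTypeD_dM5 ρJ ρK, isTypeD_dN5 ρJ ρK, ?_⟩
  rw [← reducedDiff_dM5]
  exact Cancellation.htpyEquiv_reducedDiff (isTypeD_dM5 ρJ ρK) (by decide) rfl GN5.range_toGM5

theorem statement5 (A : Type) [Ring A] [Algebra (ZMod 2) A] (T : TorusAlg A)
    (ρJ ρK : A)
    (hJ : ρJ ∈ ({T.r1, T.r2, T.r3, T.r12, T.r23, T.r123} : Set A))
    (hK : ρK ∈ ({T.r1, T.r2, T.r3, T.r12, T.r23, T.r123} : Set A))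
    (hJK : ρJ * ρK ≠ 0) :
    IsTypeD (dM5 ρJ ρK) ∧ IsTypeD (dN5 ρJ ρK) ∧
      HtpyEquiv (dM5 ρJ ρK) (dN5 ρJ ρK) :=
  statement5_general A ρJ ρK
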